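/- Let p and p' be real numbers with 0 < p < 1/2 and 0 < p' < 1. Let c1, c2, c3, c4, c5 be independent Boolean random variables with Pr[c1 = 0] = Pr[c5 = 0] = (1-2p)/(1-p), Pr[c2 = 0] = Pr[c4 = 0] = p, and Pr[c3 = 0] = p'. Then each of the four events { c2 = 0 ∧ c3 = 1 ∧ c4 = 0 }, { c2 = 0 ∧ c3 = 1 ∧ c4 = 1 ∧ c5 = 1 }, { c1 = 1 ∧ c2 = 1 ∧ c3 = 1 ∧ c4 = 0 }, and { c1 = c2 = c3 = c4 = c5 = 1 } has probability exactly p²(1-p'). -/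

import Mathlib

/-!
Each event fixes some coordinates and leaves the others free, so its probability is the
product of the marginals of the fixed coordinates. With `q = (1-2p)/(1-p)` one has
`Pr[c₁ = 1] · Pr[c₂ = 1] = (p/(1-p)) · (1-p) = p = Pr[c₂ = 0]`, and likewise for `c₅, c₄`;
hence every one of the four rows collapses to `p · (1-p') · p`.
-/

open Finset

/-- `gadgetWeight p p' i b` is the probability that the `i`-th basis-choice bit `cᵢ`
equals `b`, where `false` encodes the bit value `0`:
`Pr[c₁ = 0] = Pr[c₅ = 0] = (1-2p)/(1-p)`, `Pr[c₂ = 0] = Pr[c₄ = 0] = p`,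
`Pr[c₃ = 0] = p'` (indices are shifted to `0,…,4`). -/
noncomputable def gadgetWeight (p p' : ℝ) (i : Fin 5) (b : Bool) : ℝ :=
  let q : ℝ :=
    if i = 0 ∨ i = 4 then (1 - 2 * p) / (1 - p)
    else if i = 1 ∨ i = 3 then p
    else p'
  if b then 1 - q else q

open scoped Classical in
/-- Probability of the event `E` under the product measure on `{0,1}⁵` with the
stated marginals. -/
noncomputable def gadgetProb (p p' : ℝ) (E : (Fin 5 → Bool) → Prop) : ℝ :=
  ∑ c : Fin 5 → Bool, if E c then ∏ i, gadgetWeight p p' i (c i) else 0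

open scoped Classical in
theorem sum_ite_forall_mem_eq_prod {ι α R : Type*} [Fintype ι] [Fintype α] [CommSemiring R]
    (w : ι → α → R) (hw : ∀ i, ∑ a, w i a = 1) (s : Finset ι) (b : ι → α) :
    (∑ c : ι → α, if ∀ i ∈ s, c i = b i then ∏ i, w i (c i) else 0)
      = ∏ i ∈ s, w i (b i) := by
  have hfactor (i : ι) :
      (∑ a, if i ∈ s → a = b i then w i a else 0) = if i ∈ s then w i (b i) else 1 := by
    by_cases hi : i ∈ s <;> simp [hi, hw]
  calc (∑ c : ι → α, if ∀ i ∈ s, c i = b i then ∏ i, w i (c i) else 0)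
      = ∑ c : ι → α, ∏ i, if i ∈ s → c i = b i then w i (c i) else 0 := by
        simp only [Fintype.prod_ite_zero]
    _ = ∏ i, ∑ a, if i ∈ s → a = b i then w i a else 0 := by rw [Fintype.prod_sum]
    _ = ∏ i ∈ s, w i (b i) := by simp only [hfactor, Fintype.prod_ite_mem]

theorem gadgetWeight_true_add_false (p p' : ℝ) (i : Fin 5) :
    gadgetWeight p p' i true + gadgetWeight p p' i false = 1 := by
  simp [gadgetWeight]

theorem gadgetProb_of_iff_cylinder (p p' : ℝ) {E : (Fin 5 → Bool) → Prop}
    (s : Finset (Fin 5)) (b : Fin 5 → Bool) (hE : ∀ c, E c ↔ ∀ i ∈ s, c i = b i) :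
    gadgetProb p p' E = ∏ i ∈ s, gadgetWeight p p' i (b i) := by
  simp only [gadgetProb, hE]
  convert sum_ite_forall_mem_eq_prod (gadgetWeight p p')
    (fun i => by simp [gadgetWeight_true_add_false]) s b

theorem gadget_plus_probs_general (p p' : ℝ) (hp : p < 1 / 2) :
    gadgetProb p p' (fun c => c 1 = false ∧ c 2 = true ∧ c 3 = false)
        = p ^ 2 * (1 - p') ∧
    gadgetProb p p' (fun c => c 1 = false ∧ c 2 = true ∧ c 3 = true ∧ c 4 = true)
        = p ^ 2 * (1 - p') ∧
    gadgetProb p p' (fun c => c 0 = true ∧ c 1 = true ∧ c 2 = true ∧ c 3 = false)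
        = p ^ 2 * (1 - p') ∧
    gadgetProb p p' (fun c =>
        c 0 = true ∧ c 1 = true ∧ c 2 = true ∧ c 3 = true ∧ c 4 = true)
        = p ^ 2 * (1 - p') := by
  have hp1 : 1 - p ≠ 0 := by linarith
  -- entries of `b` outside `s` are placeholders
  rw [gadgetProb_of_iff_cylinder p p' {1, 2, 3} ![true, false, true, false, true] (by simp),
    gadgetProb_of_iff_cylinder p p' {1, 2, 3, 4} ![true, false, true, true, true] (by simp),
    gadgetProb_of_iff_cylinder p p' {0, 1, 2, 3} ![true, true, true, false, true] (by simp),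
    gadgetProb_of_iff_cylinder p p' univ ![true, true, true, true, true]
      (by simp [Fin.forall_fin_succ])]
  simp only [gadgetWeight, Fin.prod_univ_five, prod_insert, prod_singleton, mem_insert,
    mem_singleton, Fin.isValue, Fin.reduceEq, zero_ne_one, one_ne_zero, or_self, or_false,
    or_true, not_false_eq_true, Matrix.cons_val_zero, Matrix.cons_val_one, Matrix.cons_val,
    Bool.false_eq_true, ↓reduceIte]
  field_simp
  exact ⟨trivial, by ring, by ring, by ring⟩

/-- Each of the four rows of the gadget's output table that yields a rotated state
`|+ₖ⟩` occurs with probability exactly `p²(1-p')`. -/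
theorem gadget_plus_probs (p p' : ℝ) (hp0 : 0 < p) (hp : p < 1 / 2)
    (hp'0 : 0 < p') (hp' : p' < 1) :
    gadgetProb p p' (fun c => c 1 = false ∧ c 2 = true ∧ c 3 = false)
        = p ^ 2 * (1 - p') ∧
    gadgetProb p p' (fun c => c 1 = false ∧ c 2 = true ∧ c 3 = true ∧ c 4 = true)
        = p ^ 2 * (1 - p') ∧
    gadgetProb p p' (fun c => c 0 = true ∧ c 1 = true ∧ c 2 = true ∧ c 3 = false)
        = p ^ 2 * (1 - p') ∧
    gadgetProb p p' (fun c =>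
        c 0 = true ∧ c 1 = true ∧ c 2 = true ∧ c 3 = true ∧ c 4 = true)
        = p ^ 2 * (1 - p') :=
  gadget_plus_probs_general p p' hp
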